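/- arXiv:1409.1910 — 2 statements merged into one kernel-verified Lean document; each statement's English description precedes it below -/
import Mathlib

section
/- Let H be the set of permutations φ ∈ Equiv.Perm (Fin 6) for which there exists σ ∈ Equiv.Perm (Fin 5) with c (φ i) (φ j) = σ (c i j) for all i ≠ j. Then H is a subgroup of Equiv.Perm (Fin 6), for each φ ∈ H the permutation σ is uniquely determined, and the resulting map H → Equiv.Perm (Fin 5), φ ↦ σ, is a group isomorphism. (The group of colour-permuting automorphisms of the 1-factorized K₆ is isomorphic to 𝔖₅; this is the combinatorial content of the fact that the isometry group of the building block ℬ is 𝔖₅.) -/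
open Fin.NatCast in
/-- The 1-factorization of `K₆`: the edge `{i, j}` of the complete graph on
`Fin 6` gets the colour `(i + j) mod 5` if `i, j ≤ 4`, and the edge `{i, 5}`
gets the colour `(2 * i) mod 5`. -/
def c (i j : Fin 6) : Fin 5 :=
  if i.val = 5 then ((2 * j.val : ℕ) : Fin 5)
  else if j.val = 5 then ((2 * i.val : ℕ) : Fin 5)
  else ((i.val + j.val : ℕ) : Fin 5)

/-!
Colour permutations compose, so the colour-permuting automorphisms form a group `H`, and
`φ ↦ σ` is a homomorphism because every colour occurs. Its kernel, the colour-fixing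
automorphisms, is trivial. Such a `φ` with a fixed point fixes everything, since the colours
at a vertex are distinct. A fixed-point-free one swaps the ends of the edge `a (φ a)`, which
keeps its colour, and then for any third vertex `b` the 4-cycle `a b (φ a) (φ b)` is coloured
alternately by two colours; but the union of two colour classes of `c` is a Hamiltonian
6-cycle. The map is onto `𝔖₅` because `H` contains automorphisms acting on the colours as the
5-cycle `finRotate 5` and as the transposition `(0 1)`, which generate `𝔖₅`.
-/

open Equiv

section ColourPermuting

variable {V C : Type*} (χ : V → V → C)

def IsColourPermuting (φ : Perm V) (σ : Perm C) : Prop :=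
  ∀ i j, i ≠ j → χ (φ i) (φ j) = σ (χ i j)

variable {χ}

theorem isColourPermuting_one : IsColourPermuting χ 1 1 := fun _ _ _ => rfl

theorem IsColourPermuting.mul {φ ψ : Perm V} {σ τ : Perm C} (hφ : IsColourPermuting χ φ σ)
    (hψ : IsColourPermuting χ ψ τ) : IsColourPermuting χ (φ * ψ) (σ * τ) := fun i j hij => by
  rw [Perm.mul_apply, Perm.mul_apply, hφ _ _ (ψ.injective.ne hij), hψ i j hij, Perm.mul_apply]

theorem IsColourPermuting.inv {φ : Perm V} {σ : Perm C} (hφ : IsColourPermuting χ φ σ) :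
    IsColourPermuting χ φ⁻¹ σ⁻¹ := fun i j hij => by
  rw [Perm.eq_inv_iff_eq, ← hφ _ _ (φ⁻¹.injective.ne hij), Perm.inv_def, φ.apply_symm_apply,
    φ.apply_symm_apply]

theorem IsColourPermuting.unique (hc : ∀ k, ∃ i j, i ≠ j ∧ χ i j = k) {φ : Perm V}
    {σ σ' : Perm C} (hσ : IsColourPermuting χ φ σ) (hσ' : IsColourPermuting χ φ σ') :
    σ = σ' := by
  ext1 k
  obtain ⟨i, j, hij, rfl⟩ := hc k
  rw [← hσ i j hij, hσ' i j hij]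

variable (χ)

def colourPermutingSubgroup : Subgroup (Perm V) where
  carrier := {φ | ∃ σ, IsColourPermuting χ φ σ}
  one_mem' := ⟨1, isColourPermuting_one⟩
  mul_mem' := fun ⟨σ, hσ⟩ ⟨τ, hτ⟩ => ⟨σ * τ, hσ.mul hτ⟩
  inv_mem' := fun ⟨σ, hσ⟩ => ⟨σ⁻¹, hσ.inv⟩

variable {χ}

noncomputable def colourAction (hc : ∀ k, ∃ i j, i ≠ j ∧ χ i j = k) :
    colourPermutingSubgroup χ →* Perm C where
  toFun φ := φ.2.choose
  map_one' := (Exists.choose_spec (colourPermutingSubgroup χ).one_mem).unique hc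
    isColourPermuting_one
  map_mul' φ ψ := ((φ * ψ).2.choose_spec).unique hc (φ.2.choose_spec.mul ψ.2.choose_spec)

theorem isColourPermuting_colourAction (hc : ∀ k, ∃ i j, i ≠ j ∧ χ i j = k)
    (φ : colourPermutingSubgroup χ) : IsColourPermuting χ φ (colourAction hc φ) :=
  φ.2.choose_spec

theorem colourAction_eq (hc : ∀ k, ∃ i j, i ≠ j ∧ χ i j = k) {φ : Perm V} {σ : Perm C}
    (h : IsColourPermuting χ φ σ) : colourAction hc ⟨φ, σ, h⟩ = σ :=
  (isColourPermuting_colourAction hc _).unique hc h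

theorem colourAction_injective (hc : ∀ k, ∃ i j, i ≠ j ∧ χ i j = k)
    (hfix : ∀ φ, IsColourPermuting χ φ 1 → φ = 1) : Function.Injective (colourAction hc) := by
  refine (injective_iff_map_eq_one _).2 fun φ hφ => Subtype.ext (hfix φ ?_)
  simpa only [hφ] using isColourPermuting_colourAction hc φ

theorem IsColourPermuting.eq_one_of_apply_eq_self
    (hproper : ∀ v u w, u ≠ v → w ≠ v → χ v u = χ v w → u = w) {φ : Perm V}
    (hφ : IsColourPermuting χ φ 1) {x : V} (hx : φ x = x) : φ = 1 := by
  ext1 u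
  rcases eq_or_ne u x with rfl | hux
  · exact hx
  · refine hproper x _ _ ?_ hux ?_
    · exact fun h => hux (φ.injective (h.trans hx.symm))
    · simpa only [hx, Perm.one_apply] using hφ x u hux.symm

theorem IsColourPermuting.eq_one (hV : 3 ≤ Cardinal.mk V) (hsymm : ∀ i j, χ i j = χ j i)
    (hproper : ∀ v u w, u ≠ v → w ≠ v → χ v u = χ v w → u = w)
    (hcycle : ∀ a b a' b', [a, b, a', b'].Nodup → χ a b = χ a' b' → χ b a' ≠ χ b' a)
    {φ : Perm V} (hφ : IsColourPermuting χ φ 1) : φ = 1 := by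
  by_contra hφ1
  have hmoved : ∀ x, φ x ≠ x := fun x hx => hφ1 (hφ.eq_one_of_apply_eq_self hproper hx)
  obtain ⟨a, ha⟩ : ∃ a, φ a ≠ a := not_forall.1 fun h => hφ1 (Perm.ext h)
  have hφφa : φ (φ a) = a := by
    refine hproper (φ a) _ _ (hmoved _) ha.symm ?_
    rw [hφ _ _ ha.symm, hsymm, Perm.one_apply]
  obtain ⟨b, hba, hbφa⟩ := Cardinal.exists_ne_ne_of_three_le hV a (φ a)
  have hnodup : [a, b, φ a, φ b].Nodup := by
    simp only [List.nodup_cons, List.mem_cons, List.not_mem_nil, List.nodup_nil, or_false, not_or,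
      not_false_eq_true, and_true]
    refine ⟨⟨hba.symm, ha.symm, ?_⟩, ⟨hbφa, (hmoved b).symm⟩, φ.injective.ne hba.symm⟩
    exact fun h => hbφa (φ.injective (h.symm.trans hφφa.symm))
  refine hcycle a b (φ a) (φ b) hnodup (hφ a b hba.symm).symm ?_
  calc χ b (φ a) = χ (φ b) (φ (φ a)) := (hφ b (φ a) hbφa).symm
    _ = χ (φ b) a := by rw [hφφa]

end ColourPermuting

theorem c_symm : ∀ i j, c i j = c j i := by decide

theorem c_proper : ∀ v u w, u ≠ v → w ≠ v → c v u = c v w → u = w := by decide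

theorem c_no_bicoloured_four_cycle :
    ∀ a b a' b', [a, b, a', b'].Nodup → c a b = c a' b' → c b a' ≠ c b' a := by
  decide

theorem exists_c_eq : ∀ k, ∃ i j, i ≠ j ∧ c i j = k := by decide

theorem colourAction_c_injective : Function.Injective (colourAction exists_c_eq) := by
  refine colourAction_injective exists_c_eq fun φ hφ => hφ.eq_one ?_ c_symm c_proper
    c_no_bicoloured_four_cycle
  rw [Cardinal.mk_fin]
  norm_num

/-- `x ↦ x + 3` on `ℤ/5`, fixing `5`: it adds `6 ≡ 1` to every colour. -/
def shiftColours : Perm (Fin 6) :=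
  ⟨![3, 4, 0, 1, 2, 5], ![2, 3, 4, 0, 1, 5], by decide, by decide⟩

def swapColours : Perm (Fin 6) := swap 0 2 * swap 1 3 * swap 4 5

theorem isColourPermuting_shiftColours : IsColourPermuting c shiftColours (finRotate 5) := by
  unfold IsColourPermuting
  decide

theorem isColourPermuting_swapColours : IsColourPermuting c swapColours (swap 0 1) := by
  unfold IsColourPermuting
  decide

theorem colourAction_c_surjective : Function.Surjective (colourAction exists_c_eq) := by
  rw [← MonoidHom.range_eq_top, eq_top_iff,
    ← Perm.closure_cycle_adjacent_swap isCycle_finRotate support_finRotate 0, Subgroup.closure_le]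
  rintro _ (rfl | rfl)
  · exact ⟨_, colourAction_eq exists_c_eq isColourPermuting_shiftColours⟩
  · exact ⟨_, colourAction_eq exists_c_eq isColourPermuting_swapColours⟩

/-- The colour-permuting automorphisms of the 1-factorized `K₆` form a
subgroup `H` of `Equiv.Perm (Fin 6)`; for each such automorphism `φ` the
colour permutation `σ` is unique, and `φ ↦ σ` is a group isomorphism of `H`
onto `𝔖₅`. -/
theorem colourPermutingAutomorphisms_iso_S5 :
    ∃ H : Subgroup (Equiv.Perm (Fin 6)),
      (H : Set (Equiv.Perm (Fin 6))) =
        {φ | ∃ σ : Equiv.Perm (Fin 5), ∀ i j : Fin 6, i ≠ j →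
          c (φ i) (φ j) = σ (c i j)} ∧
      (∀ (φ : Equiv.Perm (Fin 6)) (σ σ' : Equiv.Perm (Fin 5)),
        (∀ i j : Fin 6, i ≠ j → c (φ i) (φ j) = σ (c i j)) →
        (∀ i j : Fin 6, i ≠ j → c (φ i) (φ j) = σ' (c i j)) → σ = σ') ∧
      ∃ F : H →* Equiv.Perm (Fin 5),
        Function.Bijective F ∧
        ∀ (φ : H) (i j : Fin 6), i ≠ j →
          c ((φ : Equiv.Perm (Fin 6)) i) ((φ : Equiv.Perm (Fin 6)) j) =
            F φ (c i j) :=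
  ⟨colourPermutingSubgroup c, rfl, fun _ _ _ => IsColourPermuting.unique exists_c_eq,
    colourAction exists_c_eq, ⟨colourAction_c_injective, colourAction_c_surjective⟩,
    isColourPermuting_colourAction exists_c_eq⟩
end

section
/- Let H' be the set of permutations φ ∈ Equiv.Perm (Fin 6) for which there exists a permutation σ of the colour set {1,2,3,4} ⊆ Fin 5 such that for all i ≠ j with c i j ≠ 0 one has c (φ i) (φ j) ≠ 0 and c (φ i) (φ j) = σ (c i j). Then H' is a group, for each φ ∈ H' the permutation σ is unique, and the map φ ↦ σ is a group isomorphism from H' onto the symmetric group on the four colours {1,2,3,4} (i.e., H' ≅ Equiv.Perm (Fin 4)). (The group of label-permuting automorphisms of the labelled octahedral graph Γ̂ is 𝔖₄; this is the combinatorial content of the fact that the isometry group of the boundary manifold 𝒟 is 𝔖₄.) -/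
/-- The colour set of the octahedral graph `Γ̂`. -/
def S : Set (Fin 5) := {1, 2, 3, 4}

/-!
Since every colour class is a perfect matching, a vertex permutation `φ` that carries each edge of
`Γ̂` to an edge whose colour is `σ` of the old one, with `σ 0 = 0`, also carries the colour-0
matching to itself. Such pairs `(φ, σ)` are therefore closed under products and inverses, and `σ`
is determined by `φ` because every colour occurs. Only the identity preserves every colour, so
`φ ↦ σ` is injective. Its image is the stabiliser of the colour 0, a copy of `𝔖₄`: that stabiliser
is generated by a 4-cycle and a transposition of `{1, 2, 3, 4}`, and both are realised by explicit
vertex permutations.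
-/

open Equiv

section LabelledAut

variable {V K : Type*}

def IsOneFactorization (c : V → V → K) : Prop :=
  ∀ i k, ∃! j, j ≠ i ∧ c i j = k

def IsLabelledAut (c : V → V → K) (φ : Perm V) (σ : Perm K) : Prop :=
  ∀ i j, i ≠ j → c (φ i) (φ j) = σ (c i j)

variable {c : V → V → K} {φ ψ : Perm V} {σ τ : Perm K}

theorem isLabelledAut_one : IsLabelledAut c 1 1 := fun _ _ _ => rfl

theorem IsLabelledAut.mul (h : IsLabelledAut c φ σ) (h' : IsLabelledAut c ψ τ) :
    IsLabelledAut c (φ * ψ) (σ * τ) := fun i j hij => by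
  rw [Perm.mul_apply, Perm.mul_apply, h _ _ (ψ.injective.ne hij), h' i j hij, Perm.mul_apply]

theorem IsLabelledAut.inv (h : IsLabelledAut c φ σ) : IsLabelledAut c φ⁻¹ σ⁻¹ := fun i j hij => by
  rw [Perm.eq_inv_iff_eq, ← h _ _ (φ⁻¹.injective.ne hij)]
  simp only [Perm.coe_inv, apply_symm_apply]

/-- An edge of colour `k₀` cannot be sent to an edge of another colour `k`: the edge at `φ i`
of colour `k` is already the image of the edge at `i` of colour `σ⁻¹ k`. -/
theorem IsLabelledAut.of_forall_ne (hc : IsOneFactorization c) {k₀ : K} (hσ : σ k₀ = k₀)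
    (h : ∀ i j, i ≠ j → c i j ≠ k₀ → c (φ i) (φ j) = σ (c i j)) : IsLabelledAut c φ σ := by
  intro i j hij
  obtain hk | hk := ne_or_eq (c i j) k₀
  · exact h i j hij hk
  rw [hk, hσ]
  by_contra hne
  obtain ⟨j', ⟨hj'i, hj'⟩, -⟩ := hc i (σ⁻¹ (c (φ i) (φ j)))
  have hj'k₀ : c i j' ≠ k₀ := by
    rw [hj', Ne, Perm.inv_eq_iff_eq, hσ]
    exact hne
  have hj'j : j' ≠ j := by
    rintro rfl
    exact hj'k₀ hk
  have himage : c (φ i) (φ j') = c (φ i) (φ j) := by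
    rw [h i j' hj'i.symm hj'k₀, hj', Perm.coe_inv, apply_symm_apply]
  exact hj'j (φ.injective ((hc (φ i) _).unique ⟨φ.injective.ne hj'i, himage⟩
    ⟨φ.injective.ne hij.symm, rfl⟩))

theorem IsLabelledAut.unique [Nonempty V] (hc : IsOneFactorization c) (h : IsLabelledAut c φ σ)
    (h' : IsLabelledAut c φ τ) : σ = τ := by
  ext k
  obtain ⟨i⟩ := ‹Nonempty V›
  obtain ⟨j, ⟨hji, rfl⟩, -⟩ := hc i k
  rw [← h i j hji.symm, h' i j hji.symm]

variable (c) in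
/-- `k₀` is the colour of the non-edges; by `IsLabelledAut.of_forall_ne`, compatibility on the
edges of the remaining colours suffices. -/
def labelPermutingAutGroup (k₀ : K) : Subgroup (Perm V) where
  carrier := {φ | ∃ σ : Perm K, σ k₀ = k₀ ∧ IsLabelledAut c φ σ}
  one_mem' := ⟨1, rfl, isLabelledAut_one⟩
  mul_mem' := fun ⟨σ, hσ, h⟩ ⟨τ, hτ, h'⟩ => ⟨σ * τ, by rw [Perm.mul_apply, hτ, hσ], h.mul h'⟩
  inv_mem' := fun ⟨σ, hσ, h⟩ => ⟨σ⁻¹, by rw [Perm.inv_eq_iff_eq, hσ], h.inv⟩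

variable [Nonempty V] (hc : IsOneFactorization c) (k₀ : K)

noncomputable def labelPerm : labelPermutingAutGroup c k₀ →* Perm K where
  toFun φ := φ.2.choose
  map_one' := (1 : labelPermutingAutGroup c k₀).2.choose_spec.2.unique hc isLabelledAut_one
  map_mul' φ ψ := (φ * ψ).2.choose_spec.2.unique hc
    (φ.2.choose_spec.2.mul ψ.2.choose_spec.2)

theorem isFixedPt_labelPerm (φ : labelPermutingAutGroup c k₀) :
    Function.IsFixedPt (labelPerm hc k₀ φ) k₀ :=
  φ.2.choose_spec.1

theorem isLabelledAut_labelPerm (φ : labelPermutingAutGroup c k₀) :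
    IsLabelledAut c φ (labelPerm hc k₀ φ) :=
  φ.2.choose_spec.2

theorem mem_range_labelPerm :
    σ ∈ (labelPerm hc k₀).range ↔ σ k₀ = k₀ ∧ ∃ φ, IsLabelledAut c φ σ := by
  constructor
  · rintro ⟨φ, rfl⟩
    exact ⟨isFixedPt_labelPerm hc k₀ φ, φ, isLabelledAut_labelPerm hc k₀ φ⟩
  · rintro ⟨hσ, φ, h⟩
    exact ⟨⟨φ, σ, hσ, h⟩, (isLabelledAut_labelPerm hc k₀ _).unique hc h⟩

theorem labelPerm_injective (hker : ∀ φ, IsLabelledAut c φ 1 → φ = 1) :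
    Function.Injective (labelPerm hc k₀) :=
  (injective_iff_map_eq_one _).2 fun φ hφ =>
    Subtype.ext (hker φ (hφ ▸ isLabelledAut_labelPerm hc k₀ φ))

end LabelledAut

theorem Equiv.Perm.mem_range_ofSubtype_ne_iff {α : Type*} [Fintype α] [DecidableEq α] {a : α}
    {σ : Perm α} : σ ∈ (Perm.ofSubtype : Perm {x // x ≠ a} →* Perm α).range ↔ σ a = a := by
  rw [Perm.mem_range_ofSubtype_iff]
  constructor
  · intro h
    by_contra ha
    exact h (Perm.mem_support.2 ha) rfl
  · rintro ha x hx rfl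
    exact Perm.mem_support.1 hx ha

def permFinSuccHom (n : ℕ) : Perm (Fin n) →* Perm (Fin (n + 1)) :=
  Perm.ofSubtype.comp (permCongrHom (finSuccAboveEquiv 0)).toMonoidHom

theorem permFinSuccHom_injective (n : ℕ) : Function.Injective (permFinSuccHom n) :=
  Perm.ofSubtype_injective.comp (permCongrHom _).injective

theorem mem_range_permFinSuccHom_iff {n : ℕ} {σ : Perm (Fin (n + 1))} :
    σ ∈ (permFinSuccHom n).range ↔ σ 0 = 0 := by
  rw [permFinSuccHom, MonoidHom.range_comp,
    MonoidHom.range_eq_top.2 (permCongrHom _).surjective, ← MonoidHom.range_eq_map,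
    Perm.mem_range_ofSubtype_ne_iff]

theorem closure_finRotate_swap_zero_one (n : ℕ) :
    Subgroup.closure {finRotate (n + 2), swap 0 1} = ⊤ := by
  simpa using Perm.closure_cycle_adjacent_swap isCycle_finRotate support_finRotate 0

theorem mem_S_iff {x : Fin 5} : x ∈ S ↔ x ≠ 0 := by
  fin_cases x <;> simp [S]

theorem image_S_eq_S_iff {σ : Perm (Fin 5)} : σ '' S = S ↔ σ 0 = 0 := by
  have hS : S = {0}ᶜ := Set.ext fun _ => mem_S_iff
  rw [hS, Set.image_compl_eq σ.bijective, Set.image_singleton, compl_inj_iff,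
    Set.singleton_eq_singleton_iff]

theorem c_isOneFactorization : IsOneFactorization c := by
  unfold IsOneFactorization ExistsUnique
  decide

set_option maxRecDepth 10000 in
theorem eq_one_of_isLabelledAut_c_one : ∀ φ : Perm (Fin 6), IsLabelledAut c φ 1 → φ = 1 := by
  unfold IsLabelledAut
  decide

theorem isLabelledAut_c_addRight_three :
    IsLabelledAut c (Equiv.addRight 3) (permFinSuccHom 4 (swap 0 1)) := by
  unfold IsLabelledAut
  decide

theorem isLabelledAut_c_formPerm :
    IsLabelledAut c (List.formPerm [0, 1, 5, 4]) (permFinSuccHom 4 (finRotate 4)) := by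
  unfold IsLabelledAut
  decide

theorem isLabelledAut_c_iff_of_apply_zero {φ : Perm (Fin 6)} {σ : Perm (Fin 5)} (hσ : σ 0 = 0) :
    IsLabelledAut c φ σ ↔ ∀ i j, i ≠ j → c i j ∈ S → c (φ i) (φ j) = σ (c i j) :=
  ⟨fun h i j hij _ => h i j hij, fun h =>
    .of_forall_ne c_isOneFactorization hσ fun i j hij hk => h i j hij (mem_S_iff.2 hk)⟩

theorem coe_labelPermutingAutGroup_c :
    (labelPermutingAutGroup c 0 : Set (Perm (Fin 6))) =
      {φ | ∃ σ : Perm (Fin 5), σ '' S = S ∧ ∀ i j : Fin 6, i ≠ j → c i j ∈ S →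
        c (φ i) (φ j) ∈ S ∧ c (φ i) (φ j) = σ (c i j)} := by
  ext φ
  refine exists_congr fun σ => ?_
  rw [image_S_eq_S_iff]
  refine and_congr_right fun hσ => ?_
  rw [isLabelledAut_c_iff_of_apply_zero hσ]
  refine forall₄_congr fun i j _ hk => ⟨fun h => ⟨?_, h⟩, And.right⟩
  rw [h, mem_S_iff, ← hσ, σ.injective.ne_iff, ← mem_S_iff]
  exact hk

theorem range_labelPerm_c :
    (labelPerm c_isOneFactorization (0 : Fin 5)).range = (permFinSuccHom 4).range := by
  have realised {τ : Perm (Fin 4)} {φ : Perm (Fin 6)} (h : IsLabelledAut c φ (permFinSuccHom 4 τ)) :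
      permFinSuccHom 4 τ ∈ (labelPerm c_isOneFactorization (0 : Fin 5)).range :=
    (mem_range_labelPerm _ _).2 ⟨mem_range_permFinSuccHom_iff.1 ⟨τ, rfl⟩, φ, h⟩
  apply le_antisymm
  · intro σ hσ
    exact mem_range_permFinSuccHom_iff.2 ((mem_range_labelPerm _ _).1 hσ).1
  · rw [MonoidHom.range_eq_map, ← closure_finRotate_swap_zero_one, MonoidHom.map_closure,
      Subgroup.closure_le, Set.image_pair, Set.insert_subset_iff, Set.singleton_subset_iff]
    exact ⟨realised isLabelledAut_c_formPerm, realised isLabelledAut_c_addRight_three⟩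

/-- The label-permuting automorphisms of the labelled octahedral graph `Γ̂`
(the graph on `Fin 6` whose edges are the edges of `K₆` with colour in
`{1,2,3,4}`) form a subgroup `H'` of `Equiv.Perm (Fin 6)`; for each
`φ ∈ H'` the label permutation `σ` is unique, and `φ ↦ σ` is a group
isomorphism from `H'` onto the symmetric group on the four colours
`{1,2,3,4}`, so `H' ≅ 𝔖₄`. -/
theorem labelPermutingAutomorphisms_iso_S4 :
    ∃ H : Subgroup (Equiv.Perm (Fin 6)),
      (H : Set (Equiv.Perm (Fin 6))) =
        {φ | ∃ σ : Equiv.Perm (Fin 5), σ '' S = S ∧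
          ∀ i j : Fin 6, i ≠ j → c i j ∈ S →
            c (φ i) (φ j) ∈ S ∧ c (φ i) (φ j) = σ (c i j)} ∧
      (∀ (φ : Equiv.Perm (Fin 6)) (σ σ' : Equiv.Perm (Fin 5)),
        σ '' S = S → σ' '' S = S →
        (∀ i j : Fin 6, i ≠ j → c i j ∈ S → c (φ i) (φ j) = σ (c i j)) →
        (∀ i j : Fin 6, i ≠ j → c i j ∈ S → c (φ i) (φ j) = σ' (c i j)) →
        σ = σ') ∧
      ∃ F : H →* Equiv.Perm (Fin 5),
        Function.Injective F ∧
        (∀ φ : H, (F φ) '' S = S ∧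
          ∀ i j : Fin 6, i ≠ j → c i j ∈ S →
            c ((φ : Equiv.Perm (Fin 6)) i) ((φ : Equiv.Perm (Fin 6)) j) =
              F φ (c i j)) ∧
        (∀ σ : Equiv.Perm (Fin 5), σ '' S = S → ∃ φ : H, F φ = σ) ∧
        Nonempty (H ≃* Equiv.Perm (Fin 4)) := by
  have hF := labelPerm_injective c_isOneFactorization (0 : Fin 5) eq_one_of_isLabelledAut_c_one
  refine ⟨_, coe_labelPermutingAutGroup_c, ?_, _, hF, fun φ => ?_, fun σ hσ => ?_, ?_⟩
  · intro φ σ σ' hσ hσ' h h'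
    exact ((isLabelledAut_c_iff_of_apply_zero (image_S_eq_S_iff.1 hσ)).2 h).unique
      c_isOneFactorization ((isLabelledAut_c_iff_of_apply_zero (image_S_eq_S_iff.1 hσ')).2 h')
  · exact ⟨image_S_eq_S_iff.2 (isFixedPt_labelPerm _ _ φ),
      fun i j hij _ => isLabelledAut_labelPerm _ _ φ i j hij⟩
  · rw [← MonoidHom.mem_range, range_labelPerm_c, mem_range_permFinSuccHom_iff]
    exact image_S_eq_S_iff.1 hσ
  · exact ⟨(MonoidHom.ofInjective hF).trans ((MulEquiv.subgroupCongr range_labelPerm_c).trans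
      (MonoidHom.ofInjective (permFinSuccHom_injective 4)).symm)⟩
end
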